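/- arXiv:2501.06603 — 5 statements merged into one kernel-verified Lean document; each statement's English description precedes it below -/
import Mathlib

section
/- Let d ≥ 1, ρ > 0, let C, D be d×d real matrices with D symmetric (Dᵀ = D) and invertible, and let g ∈ ℝ^d with C g ≠ 0. Define ε* = ρ · D⁻²Cg / ‖D⁻¹Cg‖ (where D⁻² = D⁻¹D⁻¹). Then ‖D ε*‖ = ρ, ⟨Cg, ε*⟩ = ρ ‖D⁻¹Cg‖, and for every ε ∈ ℝ^d with ‖Dε‖ ≤ ρ one has ⟨Cg, ε⟩ ≤ ⟨Cg, ε*⟩; i.e., ε* solves the preSAM subproblem max_{‖Dε‖≤ρ} ⟨Cg, ε⟩ with optimal value ρ‖D⁻¹Cg‖. -/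
open RealInnerProductSpace Matrix

lemma toEucl_mul {d : ℕ} (A B : Matrix (Fin d) (Fin d) ℝ) (x : EuclideanSpace ℝ (Fin d)) :
    Matrix.toEuclideanLin (A * B) x = Matrix.toEuclideanLin A (Matrix.toEuclideanLin B x) := by
  simp [Matrix.toEuclideanLin_apply, Matrix.mulVec_mulVec]

lemma toEucl_one {d : ℕ} (x : EuclideanSpace ℝ (Fin d)) :
    Matrix.toEuclideanLin (1 : Matrix (Fin d) (Fin d) ℝ) x = x := by
  simp [Matrix.toEuclideanLin_apply]

lemma inner_toEucl {d : ℕ} (A : Matrix (Fin d) (Fin d) ℝ) (x y : EuclideanSpace ℝ (Fin d)) :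
    ⟪Matrix.toEuclideanLin A x, y⟫ = ⟪x, Matrix.toEuclideanLin Aᵀ y⟫ := by
  have h : Matrix.toEuclideanLin Aᵀ = LinearMap.adjoint (Matrix.toEuclideanLin A) := by
    simpa using Matrix.toEuclideanLin_conjTranspose_eq_adjoint A
  rw [h]
  exact (LinearMap.adjoint_inner_right _ _ _).symm

theorem presam_subproblem_solution (d : ℕ) (hd : 1 ≤ d) (ρ : ℝ) (hρ : 0 < ρ)
    (C D : Matrix (Fin d) (Fin d) ℝ) (hDsym : Dᵀ = D) (hDinv : IsUnit D)
    (g : EuclideanSpace ℝ (Fin d))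
    (hCg : Matrix.toEuclideanLin C g ≠ 0) :
    ‖Matrix.toEuclideanLin D
        ((ρ / ‖Matrix.toEuclideanLin D⁻¹ (Matrix.toEuclideanLin C g)‖) •
          Matrix.toEuclideanLin D⁻¹
            (Matrix.toEuclideanLin D⁻¹ (Matrix.toEuclideanLin C g)))‖ = ρ ∧
    ⟪Matrix.toEuclideanLin C g,
        (ρ / ‖Matrix.toEuclideanLin D⁻¹ (Matrix.toEuclideanLin C g)‖) •
          Matrix.toEuclideanLin D⁻¹
            (Matrix.toEuclideanLin D⁻¹ (Matrix.toEuclideanLin C g))⟫ =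
      ρ * ‖Matrix.toEuclideanLin D⁻¹ (Matrix.toEuclideanLin C g)‖ ∧
    ∀ ε : EuclideanSpace ℝ (Fin d), ‖Matrix.toEuclideanLin D ε‖ ≤ ρ →
      ⟪Matrix.toEuclideanLin C g, ε⟫ ≤
        ⟪Matrix.toEuclideanLin C g,
          (ρ / ‖Matrix.toEuclideanLin D⁻¹ (Matrix.toEuclideanLin C g)‖) •
            Matrix.toEuclideanLin D⁻¹
              (Matrix.toEuclideanLin D⁻¹ (Matrix.toEuclideanLin C g))⟫ := by
  have hdet : IsUnit D.det := (Matrix.isUnit_iff_isUnit_det D).mp hDinv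
  have hDDinv : D * D⁻¹ = 1 := Matrix.mul_nonsing_inv D hdet
  have hDinvT : D⁻¹ᵀ = D⁻¹ := by rw [Matrix.transpose_nonsing_inv, hDsym]
  set u := Matrix.toEuclideanLin D⁻¹ (Matrix.toEuclideanLin C g) with hu
  have hucancel : Matrix.toEuclideanLin D u = Matrix.toEuclideanLin C g := by
    rw [hu, ← toEucl_mul, hDDinv, toEucl_one]
  have hune : u ≠ 0 := by
    intro h
    apply hCg
    rw [← hucancel, h, map_zero]
  have hunorm : ‖u‖ ≠ 0 := norm_ne_zero_iff.mpr hune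
  have hunorm' : (0:ℝ) < ‖u‖ := norm_pos_iff.mpr hune
  -- inner Cg (D⁻¹ u) = ‖u‖²
  have hinner : ⟪Matrix.toEuclideanLin C g, Matrix.toEuclideanLin D⁻¹ u⟫ = ‖u‖^2 := by
    have := inner_toEucl D⁻¹ (Matrix.toEuclideanLin C g) u
    rw [hDinvT] at this
    rw [← this, real_inner_comm, ← hu, real_inner_self_eq_norm_sq]
  have hDe : Matrix.toEuclideanLin D
      ((ρ / ‖u‖) • Matrix.toEuclideanLin D⁻¹ u) = (ρ / ‖u‖) • u := by
    rw [LinearMap.map_smul, ← toEucl_mul, hDDinv, toEucl_one]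
  have hcgnorm : ‖Matrix.toEuclideanLin C g‖ = ‖Matrix.toEuclideanLin D u‖ := by rw [hucancel]
  have hval : ⟪Matrix.toEuclideanLin C g,
      (ρ / ‖u‖) • Matrix.toEuclideanLin D⁻¹ u⟫ = ρ * ‖u‖ := by
    rw [inner_smul_right, hinner]
    field_simp
  refine ⟨?_, hval, ?_⟩
  · rw [hDe, norm_smul, Real.norm_eq_abs, abs_of_pos (by positivity)]
    field_simp
  · intro ε hε
    have h1 : ⟪Matrix.toEuclideanLin C g, ε⟫ = ⟪u, Matrix.toEuclideanLin D ε⟫ := by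
      have h2 := inner_toEucl D⁻¹ (Matrix.toEuclideanLin C g) (Matrix.toEuclideanLin D ε)
      rw [hDinvT, ← hu, ← toEucl_mul, Matrix.nonsing_inv_mul D hdet, toEucl_one] at h2
      exact h2.symm
    rw [h1, hval]
    calc ⟪u, Matrix.toEuclideanLin D ε⟫ ≤ ‖u‖ * ‖Matrix.toEuclideanLin D ε‖ :=
          real_inner_le_norm _ _
      _ ≤ ‖u‖ * ρ := by nlinarith
      _ = ρ * ‖u‖ := mul_comm _ _
end

section
/- Let (Ω, 𝓕, μ) be a probability space, let f : ℝ^d → ℝ be differentiable with gradient ∇f, and let G : ℝ^d → Ω → ℝ^d be a stochastic gradient oracle such that: (i) for every y, z ∈ ℝ^d and every ω ∈ Ω, ‖G y ω − G z ω‖ ≤ L‖y − z‖; (ii) for every y ∈ ℝ^d, ∫ G y ω dμ(ω) = ∇f(y) (with ω ↦ G y ω integrable). Let ε : Ω → ℝ^d be measurable with ‖ε ω‖ ≤ ρ · D₀ for μ-a.e. ω, where ρ, D₀ > 0. Then for every x ∈ ℝ^d and every η > 0 (assuming the integrands below are integrable): η · ∫ ⟨∇f(x), ∇f(x) − G (x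 + ε ω) ω⟩ dμ(ω) ≤ (L η² / 2) ‖∇f(x)‖² + (L D₀² ρ²) / 2. -/
open RealInnerProductSpace MeasureTheory

/- Unbiasedness lets us replace the exact gradient `f' x` by the oracle at the unperturbed point
`G x ω` without changing the mean, so the integral only sees the oracle error
`G x ω - G (x + ε ω) ω`, which Lipschitz continuity bounds by `L ρ D₀`. Cauchy–Schwarz and
`2ab ≤ a² + b²` with `a = η ‖f' x‖`, `b = ρ D₀` finish the estimate. -/

section InnerMean

variable {Ω E : Type*} [MeasurableSpace Ω] {μ : Measure Ω} [IsProbabilityMeasure μ]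
  [NormedAddCommGroup E] [InnerProductSpace ℝ E] [CompleteSpace E]

theorem integral_inner_sub_eq_of_integral_eq {X Y : Ω → E} {m : E}
    (hX : Integrable X μ) (hm : ∫ ω, X ω ∂μ = m) (v : E)
    (hY : Integrable (fun ω => ⟪v, m - Y ω⟫) μ) :
    ∫ ω, ⟪v, m - Y ω⟫ ∂μ = ∫ ω, ⟪v, X ω - Y ω⟫ ∂μ := by
  have hvX : Integrable (fun ω => ⟪v, X ω⟫) μ := hX.const_inner v
  have hvY : Integrable (fun ω => ⟪v, Y ω⟫) μ :=
    ((integrable_const ⟪v, m⟫).sub hY).congr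
      (.of_forall fun ω => by simp only [Pi.sub_apply, inner_sub_right, sub_sub_cancel])
  simp only [inner_sub_right]
  rw [integral_sub (integrable_const _) hvY, integral_sub hvX hvY, integral_inner hX, hm,
    integral_const, probReal_univ, one_smul]

theorem integral_inner_sub_le_of_norm_sub_le {X Y : Ω → E} {m : E}
    (hX : Integrable X μ) (hm : ∫ ω, X ω ∂μ = m) (v : E)
    (hY : Integrable (fun ω => ⟪v, m - Y ω⟫) μ) {C : ℝ}
    (hXY : ∀ᵐ ω ∂μ, ‖X ω - Y ω‖ ≤ C) :
    ∫ ω, ⟪v, m - Y ω⟫ ∂μ ≤ ‖v‖ * C := by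
  rw [integral_inner_sub_eq_of_integral_eq hX hm v hY]
  calc ∫ ω, ⟪v, X ω - Y ω⟫ ∂μ ≤ ∫ _ : Ω, ‖v‖ * C ∂μ := by
        refine integral_mono_ae ?_ (integrable_const _) ?_
        · exact (((hX.const_inner v).sub (integrable_const ⟪v, m⟫)).add hY).congr
            (.of_forall fun ω => by simp only [Pi.add_apply, Pi.sub_apply, inner_sub_right]; abel)
        · filter_upwards [hXY] with ω hω
          exact (real_inner_le_norm _ _).trans (mul_le_mul_of_nonneg_left hω (norm_nonneg v))
    _ = ‖v‖ * C := by simp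

end InnerMean

theorem presam_lemma1_general {d : ℕ} {Ω : Type*} [MeasurableSpace Ω]
    (μ : Measure Ω) [IsProbabilityMeasure μ]
    (f' : EuclideanSpace ℝ (Fin d) → EuclideanSpace ℝ (Fin d))
    (G : EuclideanSpace ℝ (Fin d) → Ω → EuclideanSpace ℝ (Fin d))
    (L : ℝ) (hL : 0 < L)
    (hLip : ∀ y z ω, ‖G y ω - G z ω‖ ≤ L * ‖y - z‖)
    (hIntG : ∀ y, Integrable (fun ω => G y ω) μ)
    (hUnbiased : ∀ y, ∫ ω, G y ω ∂μ = f' y)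
    (ε : Ω → EuclideanSpace ℝ (Fin d))
    (ρ D₀ : ℝ)
    (hε : ∀ᵐ ω ∂μ, ‖ε ω‖ ≤ ρ * D₀)
    (x : EuclideanSpace ℝ (Fin d)) (η : ℝ) (hη : 0 < η)
    (hInt : Integrable (fun ω => ⟪f' x, f' x - G (x + ε ω) ω⟫) μ) :
    η * ∫ ω, ⟪f' x, f' x - G (x + ε ω) ω⟫ ∂μ ≤
      L * η ^ 2 / 2 * ‖f' x‖ ^ 2 + L * D₀ ^ 2 * ρ ^ 2 / 2 := by
  have hErr : ∀ᵐ ω ∂μ, ‖G x ω - G (x + ε ω) ω‖ ≤ L * (ρ * D₀) := by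
    filter_upwards [hε] with ω hω
    calc ‖G x ω - G (x + ε ω) ω‖ ≤ L * ‖x - (x + ε ω)‖ := hLip _ _ ω
      _ = L * ‖ε ω‖ := by rw [sub_add_cancel_left, norm_neg]
      _ ≤ L * (ρ * D₀) := mul_le_mul_of_nonneg_left hω hL.le
  have hMean := integral_inner_sub_le_of_norm_sub_le (hIntG x) (hUnbiased x) (f' x) hInt hErr
  calc η * ∫ ω, ⟪f' x, f' x - G (x + ε ω) ω⟫ ∂μ ≤ η * (‖f' x‖ * (L * (ρ * D₀))) :=
        mul_le_mul_of_nonneg_left hMean hη.le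
    _ ≤ L * η ^ 2 / 2 * ‖f' x‖ ^ 2 + L * D₀ ^ 2 * ρ ^ 2 / 2 := by
        nlinarith [mul_le_mul_of_nonneg_left (two_mul_le_add_sq (η * ‖f' x‖) (ρ * D₀)) hL.le]

theorem presam_lemma1 {d : ℕ} {Ω : Type*} [MeasurableSpace Ω]
    (μ : Measure Ω) [IsProbabilityMeasure μ]
    (f : EuclideanSpace ℝ (Fin d) → ℝ)
    (f' : EuclideanSpace ℝ (Fin d) → EuclideanSpace ℝ (Fin d))
    (hf : ∀ x, HasGradientAt f (f' x) x)
    (G : EuclideanSpace ℝ (Fin d) → Ω → EuclideanSpace ℝ (Fin d))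
    (L : ℝ) (hL : 0 < L)
    (hLip : ∀ y z ω, ‖G y ω - G z ω‖ ≤ L * ‖y - z‖)
    (hIntG : ∀ y, Integrable (fun ω => G y ω) μ)
    (hUnbiased : ∀ y, ∫ ω, G y ω ∂μ = f' y)
    (ε : Ω → EuclideanSpace ℝ (Fin d)) (hεm : Measurable ε)
    (ρ D₀ : ℝ) (hρ : 0 < ρ) (hD₀ : 0 < D₀)
    (hε : ∀ᵐ ω ∂μ, ‖ε ω‖ ≤ ρ * D₀)
    (x : EuclideanSpace ℝ (Fin d)) (η : ℝ) (hη : 0 < η)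
    (hInt : Integrable (fun ω => ⟪f' x, f' x - G (x + ε ω) ω⟫) μ) :
    η * ∫ ω, ⟪f' x, f' x - G (x + ε ω) ω⟫ ∂μ ≤
      L * η ^ 2 / 2 * ‖f' x‖ ^ 2 + L * D₀ ^ 2 * ρ ^ 2 / 2 :=
  presam_lemma1_general μ f' G L hL hLip hIntG hUnbiased ε ρ D₀ hε x η hη hInt
end

section
/- Let (Ω, 𝓕, μ) be a probability space, let f : ℝ^d → ℝ be differentiable with L-Lipschitz gradient ∇f (i.e., ‖∇f(y) − ∇f(z)‖ ≤ L‖y − z‖ for all y, z), and let G : ℝ^d → Ω → ℝ^d satisfy: (i) for every y, z ∈ ℝ^d and every ω ∈ Ω, ‖G y ω − G z ω‖ ≤ L‖y − z‖; (ii) for every y ∈ ℝ^d, ∫ G y ω dμ(ω) = ∇f(y) and ∫ ‖G y ω − ∇f(y)‖² dμ(ω) ≤ σ². Let ε : Ω → ℝ^d be measurable with ‖ε ω‖ ≤ ρ · D₀ μ-a.e., where ρ, D₀ > 0. Then for every x ∈ ℝ^d and every η > 0 (assuming integrability of the integrands): ∫ f(x − η · G (x + ε ω) ω) dμ(ω)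 − f(x) ≤ −(η − 3Lη²/2) ‖∇f(x)‖² + L ρ² D₀² / 2 + L³ η² ρ² D₀² + L η² σ². -/
open RealInnerProductSpace MeasureTheory


lemma descent_lemma {d : ℕ} (f : EuclideanSpace ℝ (Fin d) → ℝ)
    (f' : EuclideanSpace ℝ (Fin d) → EuclideanSpace ℝ (Fin d))
    (hf : ∀ x, HasGradientAt f (f' x) x)
    (L : ℝ) (hL : 0 < L)
    (hSmooth : ∀ y z, ‖f' y - f' z‖ ≤ L * ‖y - z‖)
    (x u : EuclideanSpace ℝ (Fin d)) :
    f u ≤ f x + ⟪f' x, u - x⟫ + L / 2 * ‖u - x‖ ^ 2 := by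
  set v := u - x with hv
  have hcont : Continuous f' := by
    rw [Metric.continuous_iff]
    intro b eps heps
    refine ⟨eps / L, by positivity, fun a hab => ?_⟩
    calc dist (f' a) (f' b) = ‖f' a - f' b‖ := by rw [dist_eq_norm]
    _ ≤ L * ‖a - b‖ := hSmooth a b
    _ < L * (eps / L) := by
        apply mul_lt_mul_of_pos_left _ hL
        rwa [← dist_eq_norm]
    _ = eps := by field_simp
  have hline : ∀ t : ℝ, HasDerivAt (fun t : ℝ => x + t • v) v t := by
    intro t
    simpa using ((hasDerivAt_id t).smul_const v).const_add x
  have hφ : ∀ t : ℝ, HasDerivAt (fun t : ℝ => f (x + t • v)) ⟪f' (x + t • v), v⟫ t := by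
    intro t
    have h1 := (hf (x + t • v)).hasFDerivAt.comp_hasDerivAt t (hline t)
    simp only [InnerProductSpace.toDual_apply_apply] at h1
    exact h1
  have hcd : Continuous (fun t : ℝ => ⟪f' (x + t • v), v⟫) := by
    exact (hcont.comp (continuous_const.add (continuous_id.smul continuous_const))).inner continuous_const
  have hint : f (x + (1:ℝ) • v) - f (x + (0:ℝ) • v) =
      ∫ t in (0:ℝ)..1, ⟪f' (x + t • v), v⟫ := by
    rw [intervalIntegral.integral_eq_sub_of_hasDerivAt (fun t _ => hφ t)
      (hcd.intervalIntegrable 0 1)]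
  have hbound : ∫ t in (0:ℝ)..1, ⟪f' (x + t • v), v⟫ ≤
      ∫ t in (0:ℝ)..1, (⟪f' x, v⟫ + L * t * ‖v‖ ^ 2) := by
    apply intervalIntegral.integral_mono_on (by norm_num) (hcd.intervalIntegrable 0 1)
      ((continuous_const.add ((continuous_const.mul continuous_id).mul continuous_const) : Continuous fun t : ℝ => ⟪f' x, v⟫ + L * t * ‖v‖ ^ 2).intervalIntegrable 0 1)
    intro t ht
    have h1 : ⟪f' (x + t • v) - f' x, v⟫ ≤ ‖f' (x + t • v) - f' x‖ * ‖v‖ :=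
      real_inner_le_norm _ _
    have h2 : ‖f' (x + t • v) - f' x‖ ≤ L * (t * ‖v‖) := by
      have := hSmooth (x + t • v) x
      simpa [norm_smul, abs_of_nonneg ht.1, mul_assoc] using this
    have h3 : ⟪f' (x + t • v), v⟫ = ⟪f' x, v⟫ + ⟪f' (x + t • v) - f' x, v⟫ := by
      rw [inner_sub_left]; ring
    show ⟪f' (x + t • v), v⟫ ≤ ⟪f' x, v⟫ + L * t * ‖v‖ ^ 2
    nlinarith [norm_nonneg v, norm_nonneg (f' (x + t • v) - f' x), mul_le_mul_of_nonneg_right h1 (le_refl (0:ℝ))]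
  have hval : ∫ t in (0:ℝ)..1, (⟪f' x, v⟫ + L * t * ‖v‖ ^ 2) =
      ⟪f' x, v⟫ + L / 2 * ‖v‖ ^ 2 := by
    have h2 : IntervalIntegrable (fun t : ℝ => L * t * ‖v‖ ^ 2) MeasureTheory.volume 0 1 :=
      (((continuous_const.mul continuous_id).mul continuous_const) : Continuous fun t : ℝ => L * t * ‖v‖ ^ 2).intervalIntegrable 0 1
    rw [intervalIntegral.integral_add intervalIntegrable_const h2]
    simp [intervalIntegral.integral_const, mul_assoc, intervalIntegral.integral_const_mul]
    ring
  have : f u - f x ≤ ⟪f' x, v⟫ + L / 2 * ‖v‖ ^ 2 := by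
    have := hint
    simp only [one_smul, zero_smul, add_zero] at this
    have huv : x + v = u := by rw [hv]; abel
    rw [huv] at this
    linarith [hbound.trans_eq hval, this.ge.trans_eq' rfl, this]
  linarith


set_option maxHeartbeats 1000000 in
theorem presam_descent_step {d : ℕ} {Ω : Type*} [MeasurableSpace Ω]
    (μ : Measure Ω) [IsProbabilityMeasure μ]
    (f : EuclideanSpace ℝ (Fin d) → ℝ)
    (f' : EuclideanSpace ℝ (Fin d) → EuclideanSpace ℝ (Fin d))
    (hf : ∀ x, HasGradientAt f (f' x) x)
    (L σ : ℝ) (hL : 0 < L)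
    (hSmooth : ∀ y z, ‖f' y - f' z‖ ≤ L * ‖y - z‖)
    (G : EuclideanSpace ℝ (Fin d) → Ω → EuclideanSpace ℝ (Fin d))
    (hLip : ∀ y z ω, ‖G y ω - G z ω‖ ≤ L * ‖y - z‖)
    (hIntG : ∀ y, Integrable (fun ω => G y ω) μ)
    (hUnbiased : ∀ y, ∫ ω, G y ω ∂μ = f' y)
    (hIntVar : ∀ y, Integrable (fun ω => ‖G y ω - f' y‖ ^ 2) μ)
    (hVar : ∀ y, ∫ ω, ‖G y ω - f' y‖ ^ 2 ∂μ ≤ σ ^ 2)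
    (ε : Ω → EuclideanSpace ℝ (Fin d)) (hεm : Measurable ε)
    (ρ D₀ : ℝ) (hρ : 0 < ρ) (hD₀ : 0 < D₀)
    (hε : ∀ᵐ ω ∂μ, ‖ε ω‖ ≤ ρ * D₀)
    (x : EuclideanSpace ℝ (Fin d)) (η : ℝ) (hη : 0 < η)
    (hIntf : Integrable (fun ω => f (x - η • G (x + ε ω) ω)) μ)
    (hIntInner : Integrable (fun ω => ⟪f' x, G (x + ε ω) ω⟫) μ)
    (hIntSq : Integrable (fun ω => ‖G (x + ε ω) ω‖ ^ 2) μ)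
    (hIntGε : Integrable (fun ω => G (x + ε ω) ω) μ) :
    (∫ ω, f (x - η • G (x + ε ω) ω) ∂μ) - f x ≤
      -(η - 3 * L * η ^ 2 / 2) * ‖f' x‖ ^ 2 + L * ρ ^ 2 * D₀ ^ 2 / 2 +
        L ^ 3 * η ^ 2 * ρ ^ 2 * D₀ ^ 2 + L * η ^ 2 * σ ^ 2 := by
  set g : Ω → EuclideanSpace ℝ (Fin d) := fun ω => G (x + ε ω) ω with hg
  set N : ℝ := ‖f' x‖ with hN
  -- deviation bound
  have hdev : ∀ ω, ‖ε ω‖ ≤ ρ * D₀ → ‖g ω - G x ω‖ ≤ L * (ρ * D₀) := by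
    intro ω hω
    calc ‖g ω - G x ω‖ ≤ L * ‖(x + ε ω) - x‖ := hLip _ _ _
      _ = L * ‖ε ω‖ := by rw [add_sub_cancel_left]
      _ ≤ L * (ρ * D₀) := by nlinarith
  -- pointwise descent
  have hptw : ∀ ω, f (x - η • g ω) ≤ f x - η * ⟪f' x, g ω⟫ + L / 2 * η ^ 2 * ‖g ω‖ ^ 2 := by
    intro ω
    have h := descent_lemma f f' hf L hL hSmooth x (x - η • g ω)
    have h1 : x - η • g ω - x = -(η • g ω) := by abel
    rw [h1, inner_neg_right, real_inner_smul_right, norm_neg, norm_smul] at h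
    have h2 : (‖η‖ * ‖g ω‖) ^ 2 = η ^ 2 * ‖g ω‖ ^ 2 := by
      rw [Real.norm_eq_abs, mul_pow, sq_abs]
    rw [h2] at h
    linarith
  have hIntRHS : Integrable
      (fun ω => f x - η * ⟪f' x, g ω⟫ + L / 2 * η ^ 2 * ‖g ω‖ ^ 2) μ :=
    ((integrable_const (f x)).sub (hIntInner.const_mul η)).add
      (hIntSq.const_mul (L / 2 * η ^ 2))
  have step1 : ∫ ω, f (x - η • g ω) ∂μ ≤
      f x - η * ⟪f' x, ∫ ω, g ω ∂μ⟫ + L / 2 * η ^ 2 * ∫ ω, ‖g ω‖ ^ 2 ∂μ := by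
    calc ∫ ω, f (x - η • g ω) ∂μ
        ≤ ∫ ω, (f x - η * ⟪f' x, g ω⟫ + L / 2 * η ^ 2 * ‖g ω‖ ^ 2) ∂μ :=
          integral_mono hIntf hIntRHS hptw
      _ = f x - η * ⟪f' x, ∫ ω, g ω ∂μ⟫ + L / 2 * η ^ 2 * ∫ ω, ‖g ω‖ ^ 2 ∂μ := by
          have hA : Integrable (fun ω => f x - η * ⟪f' x, g ω⟫) μ :=
            (integrable_const (f x)).sub (hIntInner.const_mul η)
          have hB : Integrable (fun ω => L / 2 * η ^ 2 * ‖g ω‖ ^ 2) μ :=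
            hIntSq.const_mul (L / 2 * η ^ 2)
          have e1 : ∫ ω, (f x - η * ⟪f' x, g ω⟫ + L / 2 * η ^ 2 * ‖g ω‖ ^ 2) ∂μ
              = (∫ ω, (f x - η * ⟪f' x, g ω⟫) ∂μ) + ∫ ω, L / 2 * η ^ 2 * ‖g ω‖ ^ 2 ∂μ :=
            integral_add hA hB
          have e2 : ∫ ω, (f x - η * ⟪f' x, g ω⟫) ∂μ
              = (∫ _ω, f x ∂μ) - ∫ ω, η * ⟪f' x, g ω⟫ ∂μ :=
            integral_sub (integrable_const (f x)) (hIntInner.const_mul η)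
          have e3 : ∫ ω, η * ⟪f' x, g ω⟫ ∂μ = η * ∫ ω, ⟪f' x, g ω⟫ ∂μ :=
            integral_const_mul η _
          have e4 : ∫ ω, L / 2 * η ^ 2 * ‖g ω‖ ^ 2 ∂μ
              = L / 2 * η ^ 2 * ∫ ω, ‖g ω‖ ^ 2 ∂μ := integral_const_mul _ _
          rw [e1, e2, e3, e4, integral_inner hIntGε]
          simp
  -- cross term bound
  have hbnorm : ‖(∫ ω, g ω ∂μ) - f' x‖ ≤ L * (ρ * D₀) := by
    have heq : (∫ ω, g ω ∂μ) - f' x = ∫ ω, (g ω - G x ω) ∂μ := by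
      rw [integral_sub hIntGε (hIntG x), hUnbiased x]
    rw [heq]
    calc ‖∫ ω, (g ω - G x ω) ∂μ‖ ≤ ∫ ω, ‖g ω - G x ω‖ ∂μ :=
          norm_integral_le_integral_norm _
      _ ≤ ∫ _ω, L * (ρ * D₀) ∂μ := by
          apply integral_mono_ae ((hIntGε.sub (hIntG x)).norm) (integrable_const _)
          filter_upwards [hε] with ω hω
          exact hdev ω hω
      _ = L * (ρ * D₀) := by simp
  have hcross : ⟪f' x, ∫ ω, g ω ∂μ⟫ ≥ N ^ 2 - N * (L * (ρ * D₀)) := by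
    have h1 : ⟪f' x, ∫ ω, g ω ∂μ⟫ = N ^ 2 + ⟪f' x, (∫ ω, g ω ∂μ) - f' x⟫ := by
      rw [inner_sub_right, hN, real_inner_self_eq_norm_sq]; ring
    have h2 : |⟪f' x, (∫ ω, g ω ∂μ) - f' x⟫| ≤ N * ‖(∫ ω, g ω ∂μ) - f' x‖ :=
      abs_real_inner_le_norm _ _
    have h3 := (abs_le.mp h2).1
    have h4 : N * ‖(∫ ω, g ω ∂μ) - f' x‖ ≤ N * (L * (ρ * D₀)) :=
      mul_le_mul_of_nonneg_left hbnorm (norm_nonneg _)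
    linarith
  -- second moment bound
  have hIntInnerX : Integrable (fun ω => ⟪f' x, G x ω⟫) μ := (hIntG x).const_inner _
  have hexp : ∀ ω, ‖G x ω‖ ^ 2 = ‖G x ω - f' x‖ ^ 2 + 2 * ⟪f' x, G x ω⟫ - N ^ 2 := by
    intro ω
    have e := norm_sub_sq_real (G x ω) (f' x)
    rw [real_inner_comm] at e
    rw [hN]; linarith
  have hIntGx2 : Integrable (fun ω => ‖G x ω‖ ^ 2) μ := by
    have : (fun ω => ‖G x ω‖ ^ 2) =
        fun ω => ‖G x ω - f' x‖ ^ 2 + 2 * ⟪f' x, G x ω⟫ - N ^ 2 := funext hexp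
    rw [this]
    exact ((hIntVar x).add (hIntInnerX.const_mul 2)).sub (integrable_const _)
  have hEGx2 : ∫ ω, ‖G x ω‖ ^ 2 ∂μ ≤ σ ^ 2 + N ^ 2 := by
    have : ∫ ω, ‖G x ω‖ ^ 2 ∂μ =
        (∫ ω, ‖G x ω - f' x‖ ^ 2 ∂μ) + 2 * ⟪f' x, ∫ ω, G x ω ∂μ⟫ - N ^ 2 := by
      simp_rw [hexp]
      have e1 : ∫ ω, (‖G x ω - f' x‖ ^ 2 + 2 * ⟪f' x, G x ω⟫ - N ^ 2) ∂μ
          = (∫ ω, (‖G x ω - f' x‖ ^ 2 + 2 * ⟪f' x, G x ω⟫) ∂μ) - ∫ _ω, N ^ 2 ∂μ :=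
        integral_sub ((hIntVar x).add (hIntInnerX.const_mul 2)) (integrable_const _)
      have e2 : ∫ ω, (‖G x ω - f' x‖ ^ 2 + 2 * ⟪f' x, G x ω⟫) ∂μ
          = (∫ ω, ‖G x ω - f' x‖ ^ 2 ∂μ) + ∫ ω, 2 * ⟪f' x, G x ω⟫ ∂μ :=
        integral_add (hIntVar x) (hIntInnerX.const_mul 2)
      have e3 : ∫ ω, 2 * ⟪f' x, G x ω⟫ ∂μ = 2 * ∫ ω, ⟪f' x, G x ω⟫ ∂μ :=
        integral_const_mul 2 _
      rw [e1, e2, e3, integral_inner (hIntG x)]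
      simp
    rw [this, hUnbiased x, hN, real_inner_self_eq_norm_sq]
    have := hVar x
    nlinarith [norm_nonneg (f' x)]
  have hEg2 : ∫ ω, ‖g ω‖ ^ 2 ∂μ ≤ 2 * (σ ^ 2 + N ^ 2) + 2 * (L * (ρ * D₀)) ^ 2 := by
    have hp : ∀ᵐ ω ∂μ, ‖g ω‖ ^ 2 ≤ 2 * ‖G x ω‖ ^ 2 + 2 * (L * (ρ * D₀)) ^ 2 := by
      filter_upwards [hε] with ω hω
      have h1 := hdev ω hω
      have h2 : ‖g ω‖ ≤ ‖G x ω‖ + ‖g ω - G x ω‖ := by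
        calc ‖g ω‖ = ‖G x ω + (g ω - G x ω)‖ := by rw [add_sub_cancel]
          _ ≤ ‖G x ω‖ + ‖g ω - G x ω‖ := norm_add_le _ _
      have h3 : ‖g ω‖ ≤ ‖G x ω‖ + L * (ρ * D₀) := h2.trans (by linarith)
      have h4 : ‖g ω‖ ^ 2 ≤ (‖G x ω‖ + L * (ρ * D₀)) ^ 2 :=
        pow_le_pow_left₀ (norm_nonneg _) h3 2
      nlinarith [sq_nonneg (‖G x ω‖ - L * (ρ * D₀))]
    calc ∫ ω, ‖g ω‖ ^ 2 ∂μ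
        ≤ ∫ ω, (2 * ‖G x ω‖ ^ 2 + 2 * (L * (ρ * D₀)) ^ 2) ∂μ :=
          integral_mono_ae hIntSq ((hIntGx2.const_mul 2).add (integrable_const _)) hp
      _ = 2 * (∫ ω, ‖G x ω‖ ^ 2 ∂μ) + 2 * (L * (ρ * D₀)) ^ 2 := by
          have e1 : ∫ ω, (2 * ‖G x ω‖ ^ 2 + 2 * (L * (ρ * D₀)) ^ 2) ∂μ
              = (∫ ω, 2 * ‖G x ω‖ ^ 2 ∂μ) + ∫ _ω, 2 * (L * (ρ * D₀)) ^ 2 ∂μ :=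
            integral_add (hIntGx2.const_mul 2) (integrable_const _)
          have e2 : ∫ ω, 2 * ‖G x ω‖ ^ 2 ∂μ = 2 * ∫ ω, ‖G x ω‖ ^ 2 ∂μ :=
            integral_const_mul 2 _
          rw [e1, e2]
          simp
      _ ≤ 2 * (σ ^ 2 + N ^ 2) + 2 * (L * (ρ * D₀)) ^ 2 := by linarith
  -- final assembly
  have hc1 : η * (N ^ 2 - N * (L * (ρ * D₀))) ≤ η * ⟪f' x, ∫ ω, g ω ∂μ⟫ :=
    mul_le_mul_of_nonneg_left hcross hη.le
  have hc2 : L / 2 * η ^ 2 * (∫ ω, ‖g ω‖ ^ 2 ∂μ) ≤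
      L / 2 * η ^ 2 * (2 * (σ ^ 2 + N ^ 2) + 2 * (L * (ρ * D₀)) ^ 2) :=
    mul_le_mul_of_nonneg_left hEg2 (by positivity)
  have young : η * (N * (L * (ρ * D₀))) ≤ L * η ^ 2 / 2 * N ^ 2 + L * ρ ^ 2 * D₀ ^ 2 / 2 := by
    nlinarith [mul_nonneg hL.le (sq_nonneg (η * N - ρ * D₀))]
  nlinarith [step1, hc1, hc2, young]
end

section
/- Let d ≥ 1, ρ > 0, 1 ≤ n ≤ d, and let g ∈ ℝ^d. Let I ⊆ {1,…,d} be a set of n coordinates containing n largest-magnitude entries of g, i.e., |I| = n and |g_j| ≤ |g_i| for every i ∈ I and j ∉ I; assume the vector g_I (defined by (g_I)_i = g_i for i ∈ I and (g_I)_i = 0 otherwise) is nonzero. Then ε* = ρ · g_I / ‖g_I‖ satisfies ‖ε*‖ = ρ, its support is contained in I (so has at most n elements), and for every ε ∈ ℝ^d with ‖ε‖ ≤ ρ whose support has at most n elements, ⟨g, ε⟩ ≤ ⟨g, ε*⟩ = ρ ‖g_I‖. -/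
open RealInnerProductSpace

lemma sum_le_sum_of_card_le' {α : Type*} [DecidableEq α] (s t : Finset α) (f : α → ℝ)
    (hcard : s.card ≤ t.card)
    (hle : ∀ a ∈ s, ∀ b ∈ t, f a ≤ f b)
    (hf : ∀ b ∈ t, 0 ≤ f b) :
    ∑ a ∈ s, f a ≤ ∑ b ∈ t, f b := by
  obtain ⟨t', ht't, ht'card⟩ := Finset.exists_subset_card_eq hcard
  have e : {x // x ∈ s} ≃ {x // x ∈ t'} := Finset.equivOfCardEq ht'card.symm
  have h1 : ∑ a ∈ s, f a ≤ ∑ a ∈ s.attach, f (e a : α) := by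
    rw [← Finset.sum_attach s f]
    exact Finset.sum_le_sum fun a _ => hle a a.2 (e a) (ht't (e a).2)
  have h2 : ∑ a ∈ s.attach, f (e a : α) = ∑ b ∈ t', f b := by
    rw [← Finset.sum_attach t' f]
    exact (Equiv.sum_comp e (fun b : {x // x ∈ t'} => f b)).trans (by simp)
  calc ∑ a ∈ s, f a ≤ ∑ b ∈ t', f b := h1.trans_eq h2
    _ ≤ ∑ b ∈ t, f b := Finset.sum_le_sum_of_subset_of_nonneg ht't fun b hb _ => hf b hb

theorem op_n_support_ball (d n : ℕ) (hd : 1 ≤ d) (hn : 1 ≤ n) (hnd : n ≤ d)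
    (ρ : ℝ) (hρ : 0 < ρ)
    (g : EuclideanSpace ℝ (Fin d))
    (I : Finset (Fin d)) (hI : I.card = n)
    (hItop : ∀ i ∈ I, ∀ j ∉ I, |g j| ≤ |g i|)
    (gI : EuclideanSpace ℝ (Fin d)) (hgI : ∀ i, gI i = if i ∈ I then g i else 0)
    (hgI0 : gI ≠ 0) :
    let ε : EuclideanSpace ℝ (Fin d) := (ρ / ‖gI‖) • gI
    ‖ε‖ = ρ ∧
    (∀ i, ε i ≠ 0 → i ∈ I) ∧
    ⟪g, ε⟫ = ρ * ‖gI‖ ∧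
    ∀ ε' : EuclideanSpace ℝ (Fin d), ‖ε'‖ ≤ ρ →
      (Finset.univ.filter fun i => ε' i ≠ 0).card ≤ n → ⟪g, ε'⟫ ≤ ⟪g, ε⟫ := by
  intro ε
  have hgInorm : 0 < ‖gI‖ := norm_pos_iff.mpr hgI0
  have hεnorm : ‖ε‖ = ρ := by
    rw [norm_smul, Real.norm_eq_abs, abs_of_pos (div_pos hρ hgInorm),
      div_mul_cancel₀ _ hgInorm.ne']
  have hinner_g_gI : ⟪g, gI⟫ = ‖gI‖ ^ 2 := by
    rw [← real_inner_self_eq_norm_sq]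
    simp only [PiLp.inner_apply, RCLike.inner_apply, conj_trivial]
    refine Finset.sum_congr rfl fun i _ => ?_
    rw [hgI i]
    by_cases h : i ∈ I <;> simp [h]
  have hinner : ⟪g, ε⟫ = ρ * ‖gI‖ := by
    rw [real_inner_smul_right, hinner_g_gI]
    field_simp
  refine ⟨hεnorm, ?_, hinner, ?_⟩
  · intro i hi
    by_contra h
    apply hi
    show (ρ / ‖gI‖) * gI i = 0
    rw [hgI i, if_neg h, mul_zero]
  · intro ε' hε'norm hε'card
    rw [hinner]
    set S : Finset (Fin d) := Finset.univ.filter fun i => ε' i ≠ 0 with hS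
    set gS : EuclideanSpace ℝ (Fin d) := WithLp.toLp 2 (fun i => if i ∈ S then g i else 0) with hgSdef
    have h1 : ⟪g, ε'⟫ = ⟪gS, ε'⟫ := by
      simp only [PiLp.inner_apply, RCLike.inner_apply, conj_trivial]
      refine Finset.sum_congr rfl fun i _ => ?_
      by_cases h : i ∈ S
      · simp [hgSdef, h]
      · have : ε' i = 0 := by simpa [hS] using h
        simp [this]
    have hnormsq : ∀ (x : EuclideanSpace ℝ (Fin d)), ‖x‖ ^ 2 = ∑ i, (x i) ^ 2 := by
      intro x
      rw [EuclideanSpace.norm_eq, Real.sq_sqrt (Finset.sum_nonneg fun i _ => sq_nonneg _)]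
      simp [sq_abs]
    have hgSle : ‖gS‖ ≤ ‖gI‖ := by
      have hsq : ‖gS‖ ^ 2 ≤ ‖gI‖ ^ 2 := by
        rw [hnormsq, hnormsq]
        have hl : ∀ (T : Finset (Fin d)) (x : EuclideanSpace ℝ (Fin d)),
            (∀ i, x i = if i ∈ T then g i else 0) → ∑ i, (x i) ^ 2 = ∑ i ∈ T, (g i) ^ 2 := by
          intro T x hx
          rw [← Finset.sum_filter_add_sum_filter_not Finset.univ (· ∈ T)]
          have : ∀ i ∈ Finset.univ.filter (· ∉ T), (x i) ^ 2 = 0 := by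
            intro i hi
            simp only [Finset.mem_filter] at hi
            rw [hx i, if_neg hi.2]; ring
          rw [Finset.sum_eq_zero this, add_zero]
          refine (Finset.sum_congr (by simp [Finset.filter_mem_eq_inter]) fun i hi => ?_)
          rw [hx i, if_pos hi]
        rw [hl S gS fun i => rfl, hl I gI hgI]
        -- split on S ∩ I
        rw [← Finset.sum_filter_add_sum_filter_not S (· ∈ I),
          ← Finset.sum_filter_add_sum_filter_not I (· ∈ S)]
        have hinter : S.filter (· ∈ I) = I.filter (· ∈ S) := by
          ext i; simp [Finset.mem_filter, and_comm]
        rw [hinter]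
        refine add_le_add (le_refl _) (sum_le_sum_of_card_le' (α := Fin d) _ _ _ ?_ ?_ fun b _ => sq_nonneg _)
        · have h1 : (S.filter (· ∉ I)).card + (S.filter (· ∈ I)).card = S.card := by
            rw [add_comm]; exact Finset.card_filter_add_card_filter_not _
          have h2 : (I.filter (· ∉ S)).card + (I.filter (· ∈ S)).card = I.card := by
            rw [add_comm, Finset.card_filter_add_card_filter_not]
          have h3 : (S.filter (· ∈ I)).card = (I.filter (· ∈ S)).card := by rw [hinter]
          omega
        · intro a ha b hb
          simp only [Finset.mem_filter] at ha hb
          have := hItop b hb.1 a ha.2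
          calc (g a)^2 = |g a|^2 := (sq_abs _).symm
            _ ≤ |g b|^2 := by
                apply pow_le_pow_left₀ (abs_nonneg _) this
            _ = (g b)^2 := sq_abs _
      nlinarith [norm_nonneg gS, norm_nonneg gI]
    calc ⟪g, ε'⟫ = ⟪gS, ε'⟫ := h1
      _ ≤ ‖gS‖ * ‖ε'‖ := real_inner_le_norm _ _
      _ ≤ ‖gI‖ * ρ := by
          apply mul_le_mul hgSle hε'norm (norm_nonneg _) (norm_nonneg _)
      _ = ρ * ‖gI‖ := mul_comm _ _
end

section
/- Let d ≥ 1, ρ > 0, and let g ∈ ℝ^d with g_i ≠ 0 for every coordinate i. Let D = diag(|g_1|, …, |g_d|) (symmetric and invertible). Then the preSAM perturbation with C = I_d, namely ε* = ρ · D⁻²g / ‖D⁻¹g‖, has coordinates ε*_i = ρ / (√d · g_i); it satisfies ‖D ε*‖ = ρ, and for every ε ∈ ℝ^d with ‖D ε‖ ≤ ρ one has ⟨g, ε⟩ ≤ ⟨g, ε*⟩ = ρ √d. -/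
open RealInnerProductSpace

lemma diag_inv_eq (d : ℕ) (w : Fin d → ℝ) (hw : ∀ i, w i ≠ 0) :
    (Matrix.diagonal w)⁻¹ = Matrix.diagonal fun i => (w i)⁻¹ := by
  apply Matrix.inv_eq_right_inv
  rw [Matrix.diagonal_mul_diagonal]
  simp [mul_inv_cancel₀, hw]

lemma diag_apply (d : ℕ) (w : Fin d → ℝ) (v : EuclideanSpace ℝ (Fin d)) (i : Fin d) :
    Matrix.toEuclideanLin (Matrix.diagonal w) v i = w i * v i := by
  simp [Matrix.toEuclideanLin_apply, Matrix.mulVec_diagonal]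

theorem fishersam_cp_solution (d : ℕ) (hd : 1 ≤ d) (ρ : ℝ) (hρ : 0 < ρ)
    (g : EuclideanSpace ℝ (Fin d)) (hg : ∀ i, g i ≠ 0) :
    let D : Matrix (Fin d) (Fin d) ℝ := Matrix.diagonal fun i => |g i|
    let ε : EuclideanSpace ℝ (Fin d) :=
      (ρ / ‖Matrix.toEuclideanLin D⁻¹ g‖) •
        Matrix.toEuclideanLin D⁻¹ (Matrix.toEuclideanLin D⁻¹ g)
    (∀ i, ε i = ρ / (Real.sqrt d * g i)) ∧
    ‖Matrix.toEuclideanLin D ε‖ = ρ ∧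
    ⟪g, ε⟫ = ρ * Real.sqrt d ∧
    ∀ ε' : EuclideanSpace ℝ (Fin d), ‖Matrix.toEuclideanLin D ε'‖ ≤ ρ →
      ⟪g, ε'⟫ ≤ ⟪g, ε⟫ := by
  intro D ε
  have habs : ∀ i, |g i| ≠ 0 := fun i => abs_ne_zero.mpr (hg i)
  have hDinv : D⁻¹ = Matrix.diagonal fun i => |g i|⁻¹ :=
    diag_inv_eq d _ habs
  have hd0 : (0:ℝ) < d := by exact_mod_cast Nat.lt_of_lt_of_le Nat.zero_lt_one hd
  have hsd : (0:ℝ) < Real.sqrt d := Real.sqrt_pos.mpr hd0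
  -- norm of D⁻¹ g is √d
  have hn : ‖Matrix.toEuclideanLin D⁻¹ g‖ = Real.sqrt d := by
    rw [EuclideanSpace.norm_eq]
    congr 1
    calc ∑ i, ‖Matrix.toEuclideanLin D⁻¹ g i‖ ^ 2
        = ∑ i : Fin d, (1:ℝ) := by
          apply Finset.sum_congr rfl
          intro i _
          rw [hDinv, diag_apply]
          simp [Real.norm_eq_abs, abs_mul, abs_inv, abs_abs, inv_mul_cancel₀ (habs i)]
      _ = d := by simp
  -- coordinate formula
  have hcoord : ∀ i, ε i = ρ / (Real.sqrt d * g i) := by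
    intro i
    show (ρ / ‖Matrix.toEuclideanLin D⁻¹ g‖) * (Matrix.toEuclideanLin D⁻¹ (Matrix.toEuclideanLin D⁻¹ g)) i = _
    rw [hn, hDinv, diag_apply, diag_apply]
    have h2 : |g i|⁻¹ * (|g i|⁻¹ * g i) = (g i)⁻¹ := by
      rw [← mul_assoc, ← mul_inv, ← sq, sq_abs, sq]
      field_simp
    rw [h2]
    field_simp
  -- D ε coordinates
  have hDε : ∀ i, Matrix.toEuclideanLin D ε i = |g i| * (ρ / (Real.sqrt d * g i)) := by
    intro i
    rw [diag_apply, hcoord]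
  have hnorm : ‖Matrix.toEuclideanLin D ε‖ = ρ := by
    rw [EuclideanSpace.norm_eq]
    have h3 : ∑ i, ‖Matrix.toEuclideanLin D ε i‖ ^ 2 = ∑ i : Fin d, ρ^2 / d := by
      apply Finset.sum_congr rfl
      intro i _
      rw [hDε i, Real.norm_eq_abs, sq_abs]
      rw [mul_pow, div_pow, mul_pow, Real.sq_sqrt hd0.le, sq_abs]
      field_simp [hg i, ne_of_gt hd0]
    rw [h3]
    simp only [Finset.sum_const, Finset.card_univ, Fintype.card_fin, nsmul_eq_mul]
    rw [mul_div_cancel₀ _ (ne_of_gt hd0)]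
    exact Real.sqrt_sq hρ.le
  have hinner : ⟪g, ε⟫ = ρ * Real.sqrt d := by
    rw [PiLp.inner_apply]
    have h1 : ∀ i : Fin d, (inner ℝ (g i) (ε i) : ℝ) = ρ / Real.sqrt d := by
      intro i
      rw [RCLike.inner_apply, starRingEnd_apply, star_trivial, hcoord i]
      field_simp [hg i]
    rw [Finset.sum_congr rfl (fun i _ => h1 i)]
    simp only [Finset.sum_const, Finset.card_univ, Fintype.card_fin, nsmul_eq_mul]
    rw [← mul_div_assoc, div_eq_iff (ne_of_gt hsd), mul_assoc, Real.mul_self_sqrt hd0.le]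
    ring
  refine ⟨hcoord, hnorm, hinner, ?_⟩
  intro ε' hε'
  set s : EuclideanSpace ℝ (Fin d) := WithLp.toLp 2 (fun i => g i / |g i|) with hs
  have hsnorm : ‖s‖ = Real.sqrt d := by
    rw [EuclideanSpace.norm_eq]
    congr 1
    calc ∑ i, ‖s i‖ ^ 2 = ∑ i : Fin d, (1:ℝ) := by
          apply Finset.sum_congr rfl
          intro i _
          rw [Real.norm_eq_abs, sq_abs, hs]
          show (g i / |g i|) ^ 2 = 1
          rw [div_pow, sq_abs, div_self (pow_ne_zero 2 (hg i))]
      _ = d := by simp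
  have key : ⟪g, ε'⟫ = ⟪s, Matrix.toEuclideanLin D ε'⟫ := by
    rw [PiLp.inner_apply, PiLp.inner_apply]
    apply Finset.sum_congr rfl
    intro i _
    rw [RCLike.inner_apply, RCLike.inner_apply, starRingEnd_apply, starRingEnd_apply,
      star_trivial, star_trivial, diag_apply]
    show ε' i * g i = |g i| * ε' i * (g i / |g i|)
    rw [mul_div_assoc', eq_div_iff (habs i)]
    ring
  have hcs := real_inner_le_norm s (Matrix.toEuclideanLin D ε')
  rw [key, hinner]
  calc ⟪s, Matrix.toEuclideanLin D ε'⟫ ≤ ‖s‖ * ‖Matrix.toEuclideanLin D ε'‖ := hcs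
    _ ≤ Real.sqrt d * ρ := by
        rw [hsnorm]
        exact mul_le_mul_of_nonneg_left hε' hsd.le
    _ = ρ * Real.sqrt d := mul_comm _ _
end
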